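/- arXiv:1311.1354 — 4 statements merged into one kernel-verified Lean document; each statement's English description precedes it below -/
import Mathlib

section
/- Flipping a subset of visible and hidden units of a centered RBM and simultaneously flipping the corresponding offsets (μ_i ↦ 1-μ_i, λ_j ↦ 1-λ_j) and signs of parameters (as in the flip transformation) preserves the Gibbs joint distribution: p(x,h | θ, μ, λ) = p̃(x̃, h̃ | θ̃, μ̃, λ̃) for all states, where (x̃,h̃) denotes the flipped state. -/
open Matrix

def bvec {k : ℕ} (v : Fin k → Bool) : Fin k → ℝ := fun i => if v i then 1 else 0

/-- Flip a subset `I` of the coordinates of a binary vector. -/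
def flipB {k : ℕ} (I : Finset (Fin k)) (v : Fin k → Bool) : Fin k → Bool :=
  fun i => if i ∈ I then !v i else v i

/-- Centered RBM energy (summation form). -/
noncomputable def Erbm {N M : ℕ} (w : Matrix (Fin N) (Fin M) ℝ)
    (b μ : Fin N → ℝ) (c l : Fin M → ℝ) (x : Fin N → ℝ) (h : Fin M → ℝ) : ℝ :=
  -(∑ i, (x i - μ i) * b i) - (∑ j, (h j - l j) * c j)
    - ∑ i, ∑ j, (x i - μ i) * w i j * (h j - l j)

/-- Flipping subsets of visible and hidden units of a centered RBM together with
the corresponding offsets and parameter signs preserves the Gibbs joint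
distribution: `p(x,h | θ,μ,λ) = p̃(x̃,h̃ | θ̃,μ̃,λ̃)`. -/
theorem centered_rbm_flip_gibbs_invariant {N M : ℕ}
    (w : Matrix (Fin N) (Fin M) ℝ) (b μ : Fin N → ℝ) (c l : Fin M → ℝ)
    (I : Finset (Fin N)) (J : Finset (Fin M)) :
    let w' : Matrix (Fin N) (Fin M) ℝ :=
      fun i j => (if i ∈ I then (-1 : ℝ) else 1) * (if j ∈ J then (-1 : ℝ) else 1) * w i j
    let b' : Fin N → ℝ := fun i => (if i ∈ I then (-1 : ℝ) else 1) * b i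
    let c' : Fin M → ℝ := fun j => (if j ∈ J then (-1 : ℝ) else 1) * c j
    let μ' : Fin N → ℝ := fun i => if i ∈ I then 1 - μ i else μ i
    let l' : Fin M → ℝ := fun j => if j ∈ J then 1 - l j else l j
    ∀ (x : Fin N → Bool) (h : Fin M → Bool),
      Real.exp (-(Erbm w b μ c l (bvec x) (bvec h))) /
          (∑ s : (Fin N → Bool) × (Fin M → Bool),
              Real.exp (-(Erbm w b μ c l (bvec s.1) (bvec s.2))))
      = Real.exp (-(Erbm w' b' μ' c' l' (bvec (flipB I x)) (bvec (flipB J h)))) /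
          (∑ s : (Fin N → Bool) × (Fin M → Bool),
              Real.exp (-(Erbm w' b' μ' c' l' (bvec s.1) (bvec s.2)))) := by
  intro w' b' c' μ' l'
  have hflip : ∀ {k : ℕ} (K : Finset (Fin k)) (v : Fin k → Bool),
      flipB K (flipB K v) = v := by
    intro k K v; funext i; simp [flipB]; split_ifs <;> simp
  have hsign : ∀ {k : ℕ} (K : Finset (Fin k)) (m : Fin k → ℝ) (v : Fin k → Bool) (i : Fin k),
      bvec (flipB K v) i - (if i ∈ K then 1 - m i else m i)
        = (if i ∈ K then (-1 : ℝ) else 1) * (bvec v i - m i) := by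
    intro k K m v i
    by_cases hi : i ∈ K <;> cases hv : v i <;> simp [bvec, flipB, hi, hv] <;> ring
  have hE : ∀ (x : Fin N → Bool) (h : Fin M → Bool),
      Erbm w' b' μ' c' l' (bvec (flipB I x)) (bvec (flipB J h))
        = Erbm w b μ c l (bvec x) (bvec h) := by
    intro x h
    simp only [Erbm, w', b', c', μ', l', hsign]
    congr 1
    · congr 1
      · congr 1
        refine Finset.sum_congr rfl fun i _ => ?_
        split_ifs <;> ring
      · refine Finset.sum_congr rfl fun j _ => ?_
        split_ifs <;> ring
    · refine Finset.sum_congr rfl fun i _ => ?_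
      refine Finset.sum_congr rfl fun j _ => ?_
      split_ifs <;> ring
  intro x h
  have hZ : (∑ s : (Fin N → Bool) × (Fin M → Bool),
        Real.exp (-(Erbm w' b' μ' c' l' (bvec s.1) (bvec s.2))))
      = ∑ s : (Fin N → Bool) × (Fin M → Bool),
        Real.exp (-(Erbm w b μ c l (bvec s.1) (bvec s.2))) := by
    refine Fintype.sum_bijective (fun s => (flipB I s.1, flipB J s.2)) ?_ _ _ ?_
    · exact Function.Involutive.bijective (fun s => by simp [hflip])
    · intro s
      have h2 := hE (flipB I s.1) (flipB J s.2)
      rw [hflip, hflip] at h2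
      simp [h2]
  rw [hE x h, hZ]
end

section
/- With offsets set to the averaged means μ = ½(⟨x⟩_d + ⟨x⟩_m) and λ = ½(⟨h⟩_d + ⟨h⟩_m), the centered weight gradient equals the enhanced weight gradient: ⟨(x-μ)(h-λ)ᵀ⟩_d - ⟨(x-μ)(h-λ)ᵀ⟩_m = ⟨(x - ⟨x⟩_d)(h - ⟨h⟩_d)ᵀ⟩_d - ⟨(x - ⟨x⟩_m)(h - ⟨h⟩_m)ᵀ⟩_m. -/
open Matrix

lemma centered_sum_expand {Ω : Type*} [Fintype Ω] (p : Ω → ℝ) (hp : ∑ ω, p ω = 1)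
    (x h : Ω → ℝ) (a b : ℝ) :
    ∑ ω, p ω * ((x ω - a) * (h ω - b))
      = (∑ ω, p ω * (x ω * h ω)) - a * (∑ ω, p ω * h ω)
        - b * (∑ ω, p ω * x ω) + a * b := by
  have : ∀ ω, p ω * ((x ω - a) * (h ω - b))
      = p ω * (x ω * h ω) - a * (p ω * h ω) - b * (p ω * x ω) + (a * b) * p ω := by
    intro ω; ring
  simp_rw [this]
  rw [Finset.sum_add_distrib, Finset.sum_sub_distrib, Finset.sum_sub_distrib,
    ← Finset.mul_sum, ← Finset.mul_sum, ← Finset.mul_sum, hp, mul_one]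

/-- With offsets set to the averaged means, the centered weight gradient equals the
enhanced weight gradient (difference of covariance matrices). -/
theorem centered_gradient_eq_enhanced_gradient {Ω : Type*} [Fintype Ω] {N M : ℕ}
    (pd pm : Ω → ℝ) (hd : ∑ ω, pd ω = 1) (hm : ∑ ω, pm ω = 1)
    (X : Ω → Fin N → ℝ) (H : Ω → Fin M → ℝ)
    (μ : Fin N → ℝ) (l : Fin M → ℝ)
    (hμ : μ = (1 / 2 : ℝ) • ((∑ ω, pd ω • X ω) + (∑ ω, pm ω • X ω)))
    (hl : l = (1 / 2 : ℝ) • ((∑ ω, pd ω • H ω) + (∑ ω, pm ω • H ω))) :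
    (∑ ω, pd ω • vecMulVec (X ω - μ) (H ω - l))
        - (∑ ω, pm ω • vecMulVec (X ω - μ) (H ω - l))
    = (∑ ω, pd ω • vecMulVec (X ω - ∑ ω', pd ω' • X ω') (H ω - ∑ ω', pd ω' • H ω'))
        - (∑ ω, pm ω • vecMulVec (X ω - ∑ ω', pm ω' • X ω') (H ω - ∑ ω', pm ω' • H ω')) := by
  subst hμ hl
  ext i j
  simp only [Matrix.sub_apply, Matrix.sum_apply, Matrix.smul_apply, vecMulVec_apply,
    Pi.sub_apply, Pi.smul_apply, Pi.add_apply, Finset.sum_apply, smul_eq_mul]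
  rw [centered_sum_expand pd hd (fun ω => X ω i) (fun ω => H ω j),
      centered_sum_expand pm hm (fun ω => X ω i) (fun ω => H ω j),
      centered_sum_expand pd hd (fun ω => X ω i) (fun ω => H ω j),
      centered_sum_expand pm hm (fun ω => X ω i) (fun ω => H ω j)]
  ring
end

section
/- The centered weight gradient ⟨(x-μ)(h-λ)ᵀ⟩_d - ⟨(x-μ)(h-λ)ᵀ⟩_m equals the difference of covariances Cov_d(x,h) - Cov_m(x,h) for each of the following three choices of offsets: (i) μ = ½(⟨x⟩_d + ⟨x⟩_m), λ = ½(⟨h⟩_d + ⟨h⟩_m); (ii) μ = ⟨x⟩_d, λ = ⟨h⟩_m; (iii) μ = ⟨x⟩_m, λ = ⟨h⟩_d. -/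
open Matrix

private lemma expand_centered_sum {Ω : Type*} [Fintype Ω] (p a b : Ω → ℝ)
    (hp : ∑ ω, p ω = 1) (μ l : ℝ) :
    ∑ ω, p ω * ((a ω - μ) * (b ω - l)) =
      ∑ ω, p ω * (a ω * b ω) - μ * (∑ ω, p ω * b ω) - l * (∑ ω, p ω * a ω) + μ * l := by
  have h : ∀ ω, p ω * ((a ω - μ) * (b ω - l)) =
      p ω * (a ω * b ω) - μ * (p ω * b ω) - l * (p ω * a ω) + μ * l * p ω :=
    fun ω => by ring
  simp only [h]
  rw [Finset.sum_add_distrib, Finset.sum_sub_distrib, Finset.sum_sub_distrib,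
    ← Finset.mul_sum, ← Finset.mul_sum, ← Finset.mul_sum, hp, mul_one]

/-- The centered weight gradient equals `Cov_d(x,h) - Cov_m(x,h)` for three choices
of offsets: (i) averaged means, (ii) `μ = ⟨x⟩_d, λ = ⟨h⟩_m`, (iii) `μ = ⟨x⟩_m,
λ = ⟨h⟩_d`. -/
theorem centered_gradient_cov_for_three_offsets {Ω : Type*} [Fintype Ω] {N M : ℕ}
    (pd pm : Ω → ℝ) (hd : ∑ ω, pd ω = 1) (hm : ∑ ω, pm ω = 1)
    (X : Ω → Fin N → ℝ) (H : Ω → Fin M → ℝ) :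
    let EdX := ∑ ω, pd ω • X ω
    let EmX := ∑ ω, pm ω • X ω
    let EdH := ∑ ω, pd ω • H ω
    let EmH := ∑ ω, pm ω • H ω
    let covDiff := (∑ ω, pd ω • vecMulVec (X ω - EdX) (H ω - EdH))
        - (∑ ω, pm ω • vecMulVec (X ω - EmX) (H ω - EmH))
    let grad := fun (μ : Fin N → ℝ) (l : Fin M → ℝ) =>
      (∑ ω, pd ω • vecMulVec (X ω - μ) (H ω - l))
        - (∑ ω, pm ω • vecMulVec (X ω - μ) (H ω - l))
    grad ((1 / 2 : ℝ) • (EdX + EmX)) ((1 / 2 : ℝ) • (EdH + EmH)) = covDiff ∧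
    grad EdX EmH = covDiff ∧
    grad EmX EdH = covDiff := by
  intro EdX EmX EdH EmH covDiff grad
  refine ⟨?_, ?_, ?_⟩ <;>
  · ext i j
    simp only [grad, covDiff, EdX, EmX, EdH, EmH, Matrix.sub_apply, Matrix.sum_apply,
      Matrix.smul_apply, Finset.sum_apply,
      Pi.smul_apply, vecMulVec_apply, smul_eq_mul, Pi.sub_apply, Pi.add_apply]
    rw [expand_centered_sum pd _ _ hd, expand_centered_sum pm _ _ hm,
      expand_centered_sum pd _ _ hd, expand_centered_sum pm _ _ hm]
    ring
end

section
/- Training a centered RBM is equivalent to training a normal RBM with the centered gradient: if (W, b, c) are normal-RBM parameters, transforming to a centered RBM via b̃ = b + Wλ, c̃ = c + Wᵀμ, performing one gradient step with learning rate η on the centered parameters (Eq. ∇W̃ = ⟨(x-μ)(h-λ)ᵀ⟩_d - ⟨(x-μ)(h-λ)ᵀ⟩_m, ∇b̃ = ⟨x⟩_d - ⟨x⟩_m, ∇c̃ = ⟨h⟩_d - ⟨h⟩_m), and transforming back via b_u = b̃_u - W_u λ, c_u = c̃_u - W_uᵀ μ yields exactly W_u = W + η∇_cW, b_u = b + η∇_cb,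 c_u = c + η∇_cc, where ∇_cW = ⟨(x-μ)(h-λ)ᵀ⟩_d - ⟨(x-μ)(h-λ)ᵀ⟩_m, ∇_cb = ⟨x⟩_d - ⟨x⟩_m - (∇_cW)λ, ∇_cc = ⟨h⟩_d - ⟨h⟩_m - (∇_cW)ᵀμ. -/
open Matrix

/-- Training a centered RBM is equivalent to training a normal RBM with the
centered gradient: transforming to centered parameters, taking one gradient step,
and transforming back yields exactly the centered-gradient update. -/
theorem centered_rbm_training_eq_centered_gradient {Ω : Type*} [Fintype Ω] {N M : ℕ}
    (pd pm : Ω → ℝ) (hd : ∑ ω, pd ω = 1) (hm : ∑ ω, pm ω = 1)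
    (X : Ω → Fin N → ℝ) (H : Ω → Fin M → ℝ)
    (W : Matrix (Fin N) (Fin M) ℝ) (b μ : Fin N → ℝ) (c l : Fin M → ℝ) (η : ℝ) :
    let G := (∑ ω, pd ω • vecMulVec (X ω - μ) (H ω - l))
        - (∑ ω, pm ω • vecMulVec (X ω - μ) (H ω - l))
    let Dx := (∑ ω, pd ω • X ω) - (∑ ω, pm ω • X ω)
    let Dh := (∑ ω, pd ω • H ω) - (∑ ω, pm ω • H ω)
    let Wu := W + η • G
    let bu := ((b + W.mulVec l) + η • Dx) - Wu.mulVec l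
    let cu := ((c + Wᵀ.mulVec μ) + η • Dh) - Wuᵀ.mulVec μ
    Wu = W + η • G ∧
    bu = b + η • (Dx - G.mulVec l) ∧
    cu = c + η • (Dh - Gᵀ.mulVec μ) := by
  intro G Dx Dh Wu bu cu
  refine ⟨rfl, ?_, ?_⟩
  · show ((b + W.mulVec l) + η • Dx) - (W + η • G).mulVec l = _
    rw [add_mulVec, smul_mulVec]
    module
  · show ((c + Wᵀ.mulVec μ) + η • Dh) - (W + η • G)ᵀ.mulVec μ = _
    rw [transpose_add, transpose_smul, add_mulVec, smul_mulVec]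
    module
end
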